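/- arXiv:2406.13437 — 6 statements merged into one kernel-verified Lean document; each statement's English description precedes it below -/
import Mathlib

section
/- Exactness of Adv-MsFEM-lin in one dimension for vanishing right-hand side: let u^ε ∈ H^1(0,1) satisfy u^ε(0) = u_0, u^ε(1) = u_1 and a(u^ε, v) = 0 for all v ∈ H^1_0(0,1), and let u_H = Σ_{i=0}^{N+1} c_i φ_i with c_0 = u_0, c_{N+1} = u_1 and a(u_H, φ_i) = 0 for all i = 1,…,N (the Adv-MsFEM-lin approximation with the same nonhomogeneous Dirichlet boundary conditions). Then u_H = u^ε. -/
open Finset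

/-- Exactness of Adv-MsFEM-lin in one dimension for vanishing right-hand
side.  The domain is `Ω = (0,1)` with nodes `0 = x 0 < x 1 < … < x (N+1) = 1`.  The spaces
`H1 = H¹(0,1)`, `H10 = H¹₀(0,1)` and `H10K j = H¹₀(K_j)` (functions on the element
`K_j = (x j, x (j+1))` extended by zero) are abstract submodules of the space of real
functions, endowed with the standard structural facts of Sobolev spaces in one dimension.
`a` is the (abstract) bilinear form `a(u,v) = ∫₀¹ Aᵉ u' v' + b u' v`.  The Adv-MsFEM-lin
basis functions `φ i` satisfy the nodal conditions `φ i (x j) = δᵢⱼ` and solve the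
homogeneous local problems.  If `uε` solves the continuous problem with boundary data
`u0, u1` and zero right-hand side, and `uH = ∑ i, c i • φ i` is the Adv-MsFEM-lin
approximation with the same boundary data, then `uH = uε`. -/
theorem advMsFEM_lin_exact_1d_zero_rhs
    (N : ℕ)
    -- the nodes 0 = x_0 < x_1 < … < x_{N+1} = 1
    (x : Fin (N + 2) → ℝ) (hx : StrictMono x)
    (hx0 : x 0 = 0) (hx1 : x (Fin.last (N + 1)) = 1)
    -- abstract Sobolev spaces: H¹(0,1), H¹₀(0,1) and H¹₀(K_j) (extended by zero)
    (H1 H10 : Submodule ℝ (ℝ → ℝ)) (H10K : Fin (N + 1) → Submodule ℝ (ℝ → ℝ))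
    (hH10le : H10 ≤ H1) (hH10Kle : ∀ j, H10K j ≤ H10)
    (hH10bdry : ∀ v ∈ H10, v 0 = 0 ∧ v 1 = 0)
    -- an H¹ function vanishing at all the nodes splits into local H¹₀(K_j) contributions
    (hdecomp : ∀ v ∈ H1, (∀ j, v (x j) = 0) →
      ∃ w : Fin (N + 1) → (ℝ → ℝ), (∀ j, w j ∈ H10K j) ∧ v = ∑ j, w j)
    -- the bilinear form a(u,v) = ∫₀¹ Aᵉ u' v' + b u' v
    (a : (ℝ → ℝ) →ₗ[ℝ] (ℝ → ℝ) →ₗ[ℝ] ℝ)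
    -- the Adv-MsFEM-lin basis functions: nodal values δᵢⱼ and local a-harmonicity
    (φ : Fin (N + 2) → (ℝ → ℝ))
    (hφH1 : ∀ i, φ i ∈ H1)
    (hφnodal : ∀ i j, φ i (x j) = if i = j then (1 : ℝ) else 0)
    (hφloc : ∀ i, ∀ j, ∀ v ∈ H10K j, a (φ i) v = 0)
    -- boundary data
    (u0 u1 : ℝ)
    -- the exact solution: a(uε, v) = 0 for all v ∈ H¹₀, with uε(0) = u0, uε(1) = u1
    (uε : ℝ → ℝ) (huεH1 : uε ∈ H1) (huε0 : uε 0 = u0) (huε1 : uε 1 = u1)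
    (huεvar : ∀ v ∈ H10, a uε v = 0)
    -- the continuous problem has a unique solution
    (huniq : ∀ w ∈ H1, w 0 = u0 → w 1 = u1 → (∀ v ∈ H10, a w v = 0) → w = uε)
    -- the Adv-MsFEM-lin approximation uH = ∑ c i • φ i with the same boundary data
    (c : Fin (N + 2) → ℝ) (uH : ℝ → ℝ)
    (huHdef : uH = ∑ i, c i • φ i)
    (hc0 : c 0 = u0) (hc1 : c (Fin.last (N + 1)) = u1)
    (huHvar : ∀ i : Fin (N + 2), i ≠ 0 → i ≠ Fin.last (N + 1) → a uH (φ i) = 0) :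
    uH = uε := by
  have huHnodal : ∀ j, uH (x j) = c j := by
    intro j
    simp [huHdef, Finset.sum_apply, Pi.smul_apply, hφnodal, mul_ite]
  have huHH1 : uH ∈ H1 := by
    rw [huHdef]
    exact Submodule.sum_mem _ fun i _ => Submodule.smul_mem _ _ (hφH1 i)
  have huHloc : ∀ j, ∀ v ∈ H10K j, a uH v = 0 := by
    intro j v hv
    rw [huHdef]
    simp only [map_sum, LinearMap.sum_apply, map_smul, LinearMap.smul_apply, smul_eq_mul]
    exact Finset.sum_eq_zero fun i _ => by rw [hφloc i j v hv, mul_zero]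
  have key : ∀ v ∈ H10, a uH v = 0 := by
    intro v hv
    have hvH1 : v ∈ H1 := hH10le hv
    set vI : ℝ → ℝ := ∑ j, v (x j) • φ j with hvI
    have hvIH1 : vI ∈ H1 :=
      Submodule.sum_mem _ fun i _ => Submodule.smul_mem _ _ (hφH1 i)
    have hdiff : v - vI ∈ H1 := Submodule.sub_mem _ hvH1 hvIH1
    have hnod : ∀ j, (v - vI) (x j) = 0 := by
      intro j
      have hvIj : vI (x j) = v (x j) := by
        simp [hvI, Finset.sum_apply, hφnodal, mul_ite]
      simp [Pi.sub_apply, hvIj]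
    obtain ⟨w, hw, hweq⟩ := hdecomp _ hdiff hnod
    have h1 : a uH (v - vI) = 0 := by
      rw [hweq, map_sum]
      exact Finset.sum_eq_zero fun j _ => huHloc j _ (hw j)
    have h2 : a uH vI = 0 := by
      rw [hvI, map_sum]
      apply Finset.sum_eq_zero
      intro j _
      rw [map_smul, smul_eq_mul]
      by_cases hj0 : j = 0
      · subst hj0
        rw [hx0, (hH10bdry v hv).1, zero_mul]
      · by_cases hjl : j = Fin.last (N + 1)
        · subst hjl
          rw [hx1, (hH10bdry v hv).2, zero_mul]
        · rw [huHvar j hj0 hjl, mul_zero]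
    have hsplit : a uH v = a uH (v - vI) + a uH vI := by
      rw [map_sub]; ring
    rw [hsplit, h1, h2, add_zero]
  refine huniq uH huHH1 ?_ ?_ key
  · rw [← hx0, huHnodal, hc0]
  · rw [← hx1, huHnodal, hc1]
end

section
/- Key step of the exactness of Adv-MsFEM-CR-B: if f is constant on each mesh element K (with value f|_K) and ν ∈ H^{1,w}_{0,w}(T_H) satisfies Σ_{K∈T_H} a_K^ε(ν, v) = ∫_Ω f v for all v ∈ H^{1,w}_{0,w}(T_H), then the function φ = ν − Σ_{K∈T_H} f|_K B_K^w satisfies a_K^ε(φ, w) = 0 for every w ∈ H^1_{0,w}(K) and every element K; consequently (under uniqueness of the local problems) φ belongs to the Adv-MsFEM-CR space W_H^{ε,adv}. -/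
open Finset MeasureTheory

/-- Key step of the exactness of Adv-MsFEM-CR-B: if `f` is constant on
each mesh element `K k` (with value `fval k`) and `ν ∈ H^{1,w}_{0,w}(T_H)` satisfies
`∑_K a_K^ε(ν, v) = ∫_Ω f v` for all `v ∈ H^{1,w}_{0,w}(T_H)`, then
`φ = ν − ∑_K f|_K • B_K^w` satisfies `a_K^ε(φ, w) = 0` for every `w ∈ H¹_{0,w}(K)` and
every element `K`; consequently (under uniqueness of the local problems, recorded as the
hypothesis `hWchar`) `φ` belongs to the Adv-MsFEM-CR space `W = span{φ_e^{ε,adv}}`. -/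
theorem advMsFEM_CR_B_key_step
    (d : ℕ) (Ω : Set (Fin d → ℝ))
    (ι : Type) [Fintype ι]
    (K : ι → Set (Fin d → ℝ))
    (hKdisj : ∀ k k' : ι, k ≠ k' → Disjoint (K k) (K k'))
    (hKΩ : ∀ k, K k ⊆ Ω)
    (E Eall : Type) [Fintype E] [DecidableEq Eall] (inc : E → Eall)
    (avg : Eall → (((Fin d → ℝ) → ℝ) →ₗ[ℝ] ℝ))
    -- the element bilinear forms a_K^ε (local)
    (aK : ι → ((Fin d → ℝ) → ℝ) →ₗ[ℝ] ((Fin d → ℝ) → ℝ) →ₗ[ℝ] ℝ)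
    (haKloc : ∀ k, ∀ u u' v v' : (Fin d → ℝ) → ℝ,
      (∀ x ∈ K k, u x = u' x) → (∀ x ∈ K k, v x = v' x) → aK k u v = aK k u' v')
    -- the local spaces H¹_{0,w}(K) (extended by zero) and the broken space
    (H1w0 : ι → Submodule ℝ ((Fin d → ℝ) → ℝ))
    (hH1w0zero : ∀ k, ∀ v ∈ H1w0 k, ∀ x ∉ K k, v x = 0)
    (Hbrok : Submodule ℝ ((Fin d → ℝ) → ℝ))
    (hH1w0brok : ∀ k, H1w0 k ≤ Hbrok)
    -- the Adv-MsFEM-CR basis functions and their span W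
    (φms : E → ((Fin d → ℝ) → ℝ))
    (hφbrok : ∀ e, φms e ∈ Hbrok)
    (hφloc : ∀ e k, ∀ v ∈ H1w0 k, aK k (φms e) v = 0)
    (hφavg : ∀ e h, avg h (φms e) = if h = inc e then (1 : ℝ) else 0)
    (W : Submodule ℝ ((Fin d → ℝ) → ℝ)) (hW : W = Submodule.span ℝ (Set.range φms))
    -- uniqueness of the local problems: every broken function solving the homogeneous
    -- local problems belongs to W
    (hWchar : ∀ ψ ∈ Hbrok, (∀ k, ∀ v ∈ H1w0 k, aK k ψ v = 0) → ψ ∈ W)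
    -- the weak bubbles
    (Bw : ι → ((Fin d → ℝ) → ℝ))
    (hBwmem : ∀ k, Bw k ∈ H1w0 k)
    (hBwvar : ∀ k, ∀ v ∈ H1w0 k, aK k (Bw k) v = ∫ x in K k, v x)
    -- the right-hand side, constant on each element
    (f : (Fin d → ℝ) → ℝ) (fval : ι → ℝ) (hf : ∀ k, ∀ x ∈ K k, f x = fval k)
    -- the solution of the broken problem
    (ν : (Fin d → ℝ) → ℝ) (hνmem : ν ∈ Hbrok)
    (hνvar : ∀ v ∈ Hbrok, (∑ k, aK k ν v) = ∫ x in Ω, f x * v x) :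
    (∀ k, ∀ w ∈ H1w0 k, aK k (ν - ∑ k' : ι, fval k' • Bw k') w = 0) ∧
      (ν - ∑ k' : ι, fval k' • Bw k') ∈ W := by
  have key : ∀ k, ∀ w ∈ H1w0 k, aK k (ν - ∑ k' : ι, fval k' • Bw k') w = 0 := by
    intro k w hw
    have hwΩ : w ∈ Hbrok := hH1w0brok k hw
    -- the terms of the broken variational identity with index ≠ k vanish
    have hzero : ∀ k'' : ι, k'' ≠ k → aK k'' ν w = 0 := by
      intro k'' hne
      have h0 : aK k'' ν w = aK k'' ν 0 :=
        haKloc k'' ν ν w 0 (fun x _ => rfl) (fun x hx =>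
          hH1w0zero k w hw x (fun hxk => (hKdisj k'' k hne).le_bot ⟨hx, hxk⟩))
      simpa using h0
    have hsum : aK k ν w = ∫ x in Ω, f x * w x := by
      rw [← hνvar w hwΩ]
      exact (Finset.sum_eq_single k (fun k'' _ hne => hzero k'' hne) (by simp)).symm
    -- rewrite the right-hand side
    have h1 : ∀ x, f x * w x = fval k * w x := by
      intro x
      by_cases hx : x ∈ K k
      · rw [hf k x hx]
      · rw [hH1w0zero k w hw x hx]; ring
    have h2 : (∫ x in Ω, w x) = ∫ x in K k, w x := by
      rw [← Measure.restrict_restrict_of_subset (hKΩ k)]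
      exact (setIntegral_eq_integral_of_forall_compl_eq_zero
        (fun x hx => hH1w0zero k w hw x hx) (μ := MeasureTheory.volume.restrict Ω)).symm
    have hνw : aK k ν w = fval k * ∫ x in K k, w x := by
      rw [hsum]
      simp only [h1]
      rw [MeasureTheory.integral_const_mul, h2]
    -- the bubble part
    have hbubzero : ∀ k' : ι, k' ≠ k → aK k (Bw k') w = 0 := by
      intro k' hne
      have h0 : aK k (Bw k') w = aK k 0 w :=
        haKloc k (Bw k') 0 w w (fun x hx =>
          hH1w0zero k' (Bw k') (hBwmem k') x
            (fun hxk => (hKdisj k' k hne).le_bot ⟨hxk, hx⟩)) (fun x _ => rfl)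
      simpa using h0
    have hbub : aK k (∑ k' : ι, fval k' • Bw k') w = fval k * ∫ x in K k, w x := by
      rw [map_sum, LinearMap.sum_apply]
      rw [Finset.sum_eq_single k
        (fun k' _ hne => by
          rw [_root_.map_smul, LinearMap.smul_apply, hbubzero k' hne]; simp) (by simp)]
      rw [_root_.map_smul, LinearMap.smul_apply, hBwvar k w hw, smul_eq_mul]
    rw [map_sub, LinearMap.sub_apply, hνw, hbub, sub_self]
  refine ⟨key, hWchar _ ?_ key⟩
  exact Submodule.sub_mem _ hνmem (Submodule.sum_mem _ (fun k' _ =>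
    Submodule.smul_mem _ _ (hH1w0brok k' (hBwmem k'))))
end

section
/- Corrector expansion of the Adv-MsFEM-lin basis functions: assume each local Dirichlet problem a_K^ε(w, v) = ℓ(v) for all v ∈ H^1_0(K) with prescribed trace on ∂K has a unique solution. Then for every interior vertex index i, the Adv-MsFEM-lin basis function satisfies φ_i^{ε,adv} = φ_i^{P1} + Σ_{K∈T_H} Σ_{α=1}^{d} ∂_α(φ_i^{P1}|_K) · χ_K^α, where ∂_α(φ_i^{P1}|_K) denotes the (constant) α-th partial derivative of the affine function φ_i^{P1} on K. -/
open Finset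

/-- Corrector expansion of the Adv-MsFEM-lin basis functions:
`φ_i^{ε,adv} = φ_i^{P1} + ∑_{K} ∑_{α} ∂_α(φ_i^{P1}|_K) • χ_K^α`.
Here the mesh elements `K k ⊆ ℝ^d` are pairwise disjoint, `aK k` is the restriction
`a_K^ε` of the bilinear form to the element (local in its arguments, vanishing on
constants in its first argument since `∇(const) = 0` and `b·∇(const) = 0`),
`H10K k = H¹₀(K k)` (extended by zero), `φP1` is the P1 hat function of an interior
vertex (affine on each element with gradient `grad k`), `φms` is the Adv-MsFEM-lin
basis function (same trace as `φP1` on every `∂K`, locally `a`-harmonic) and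
`χ k α ∈ H¹₀(K k)` the numerical correctors solving `a_K^ε(χ_K^α + x^α, v) = 0`.
Uniqueness of the local Dirichlet problems is recorded by `hlocuniq`. -/
theorem advMsFEM_lin_corrector_expansion
    (d : ℕ) (ι : Type) [Fintype ι]
    (K : ι → Set (Fin d → ℝ))
    (hKdisj : ∀ k k' : ι, k ≠ k' → Disjoint (K k) (K k'))
    -- the element bilinear forms a_K^ε
    (aK : ι → ((Fin d → ℝ) → ℝ) →ₗ[ℝ] ((Fin d → ℝ) → ℝ) →ₗ[ℝ] ℝ)
    (haKloc : ∀ k, ∀ u u' v v' : (Fin d → ℝ) → ℝ,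
      (∀ x ∈ K k, u x = u' x) → (∀ x ∈ K k, v x = v' x) → aK k u v = aK k u' v')
    (haKconst : ∀ k (c : ℝ) (v : (Fin d → ℝ) → ℝ), aK k (fun _ => c) v = 0)
    -- the local spaces H¹₀(K) (extended by zero)
    (H10K : ι → Submodule ℝ ((Fin d → ℝ) → ℝ))
    (hH10Kzero : ∀ k, ∀ v ∈ H10K k, ∀ x ∉ K k, v x = 0)
    -- uniqueness of the local Dirichlet problems: two functions with the same trace on
    -- every ∂K solving the same local problems coincide
    (hlocuniq : ∀ u w : (Fin d → ℝ) → ℝ,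
      (∀ k, ∃ g ∈ H10K k, ∀ x ∈ K k, u x - w x = g x) →
      (∀ k, ∀ v ∈ H10K k, aK k u v = aK k w v) → u = w)
    -- the P1 hat function of an interior vertex, affine on each element with
    -- (constant) gradient `grad k`
    (φP1 : (Fin d → ℝ) → ℝ) (grad : ι → Fin d → ℝ)
    (hφP1affine : ∀ k, ∃ c : ℝ, ∀ x ∈ K k, φP1 x = c + ∑ α, grad k α * x α)
    -- the Adv-MsFEM-lin basis function: same trace as φP1 on every ∂K and locally
    -- a-harmonic
    (φms : (Fin d → ℝ) → ℝ)
    (hφmsbdry : ∀ k, ∃ g ∈ H10K k, ∀ x ∈ K k, φms x - φP1 x = g x)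
    (hφmsloc : ∀ k, ∀ v ∈ H10K k, aK k φms v = 0)
    -- the numerical correctors χ_K^α ∈ H¹₀(K): a_K^ε(χ_K^α + x^α, v) = 0
    (χ : ι → Fin d → (Fin d → ℝ) → ℝ)
    (hχmem : ∀ k α, χ k α ∈ H10K k)
    (hχvar : ∀ k α, ∀ v ∈ H10K k, aK k (χ k α + fun x => x α) v = 0) :
    φms = φP1 + ∑ k : ι, ∑ α : Fin d, grad k α • χ k α := by
  apply hlocuniq
  · intro k
    obtain ⟨g, hg, hgK⟩ := hφmsbdry k
    refine ⟨g - ∑ α, grad k α • χ k α,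
      Submodule.sub_mem _ hg (Submodule.sum_mem _ fun α _ =>
        Submodule.smul_mem _ _ (hχmem k α)), ?_⟩
    intro x hx
    have hw : (∑ k' : ι, ∑ α, grad k' α • χ k' α) x = ∑ α, grad k α * χ k α x := by
      rw [Finset.sum_apply, Finset.sum_eq_single k]
      · simp [Finset.sum_apply]
      · intro k' _ hk'
        rw [Finset.sum_apply]
        refine Finset.sum_eq_zero fun α _ => ?_
        have hx' : x ∉ K k' := Set.disjoint_right.mp (hKdisj k' k hk') hx
        simp [hH10Kzero k' _ (hχmem k' α) x hx']
      · simp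
    simp only [Pi.add_apply, Pi.sub_apply, Finset.sum_apply, Pi.smul_apply,
      smul_eq_mul] at hw ⊢
    rw [hw]
    linarith [hgK x hx]
  · intro k v hv
    rw [hφmsloc k v hv]
    obtain ⟨c, hc⟩ := hφP1affine k
    have key : aK k (φP1 + ∑ k', ∑ α, grad k' α • χ k' α) v
        = aK k ((fun _ => c) + ∑ α, grad k α • (χ k α + fun x => x α)) v := by
      refine haKloc k _ _ v v ?_ (fun x _ => rfl)
      intro x hx
      have hw : (∑ k' : ι, ∑ α, grad k' α • χ k' α) x = ∑ α, grad k α * χ k α x := by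
        rw [Finset.sum_apply, Finset.sum_eq_single k]
        · simp [Finset.sum_apply]
        · intro k' _ hk'
          rw [Finset.sum_apply]
          refine Finset.sum_eq_zero fun α _ => ?_
          have hx' : x ∉ K k' := Set.disjoint_right.mp (hKdisj k' k hk') hx
          simp [hH10Kzero k' _ (hχmem k' α) x hx']
        · simp
      simp only [Pi.add_apply, Finset.sum_apply, Pi.smul_apply, smul_eq_mul] at hw ⊢
      rw [hw, hc x hx]
      have h2 : ∀ α, grad k α * (χ k α x + x α) = grad k α * χ k α x + grad k α * x α :=
        fun α => by ring
      simp_rw [h2, Finset.sum_add_distrib]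
      ring
    rw [key, map_add, map_sum, LinearMap.add_apply, LinearMap.sum_apply, haKconst,
      zero_add]
    symm
    refine Finset.sum_eq_zero fun α _ => ?_
    rw [map_smul, LinearMap.smul_apply, hχvar k α v hv, smul_zero]
end

section
/- Structure of the Adv-MsFEM-CR-B linear system and explicit bubble part: (i) Σ_{T∈T_H} a_T^ε(φ_e^{ε,adv}, B_{K'}^w) = 0 for every internal face e and every element K' (the lower-left block of the system matrix vanishes); (ii) Σ_{T∈T_H} a_T^ε(B_K^w, B_{K'}^w) = 0 whenever K ≠ K', and a_K^ε(B_K^w, B_K^w) = ∫_K B_K^w (the bubble–bubble block is diagonal); (iii) consequently, if ∫_K B_K^w ≠ 0 for every K, the bubble part of the Adv-MsFEM-CR-B Galerkin solution w_{H,B}^{ε,adv} is w_B = Σ_{K∈T_H} ((∫_K f B_K^w)/(∫_K B_K^w)) B_K^w; in particular, if f is constant on each element K with value f|_K, then w_B = Σ_{K∈T_H} f|_K B_K^w. -/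
open Finset MeasureTheory

/-- Structure of the Adv-MsFEM-CR-B linear system and explicit bubble
part.  In the Crouzeix–Raviart setting (local forms `aK k = a_K^ε`, spaces
`H1w0 k = H¹_{0,w}(K)` extended by zero, basis functions `φ e = φ_e^{ε,adv}` and weak
bubbles `Bw k = B_K^w` as in the paper):
(i) `∑_T a_T^ε(φ_e, B_{K'}^w) = 0` for every internal face `e` and element `K'`;
(ii) `∑_T a_T^ε(B_K^w, B_{K'}^w) = 0` for `K ≠ K'`, and
`a_K^ε(B_K^w, B_K^w) = ∫_K B_K^w`;
(iii) if `∫_K B_K^w ≠ 0` for every `K`, the bubble part `wB` of the Adv-MsFEM-CR-B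
Galerkin solution is `wB = ∑_K ((∫_K f B_K^w)/(∫_K B_K^w)) • B_K^w`; in particular, if
`f` is constant on each element with value `f|_K`, then `wB = ∑_K f|_K • B_K^w`. -/
theorem advMsFEM_CR_B_system_structure
    (d : ℕ) (Ω : Set (Fin d → ℝ))
    (ι : Type) [Fintype ι]
    (K : ι → Set (Fin d → ℝ))
    (hKmeas : ∀ k, MeasurableSet (K k))
    (hKdisj : ∀ k k' : ι, k ≠ k' → Disjoint (K k) (K k'))
    (hKΩ : ∀ k, K k ⊆ Ω)
    (E Eall : Type) [Fintype E] [DecidableEq Eall] (inc : E → Eall)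
    (avg : Eall → (((Fin d → ℝ) → ℝ) →ₗ[ℝ] ℝ))
    -- the element bilinear forms a_K^ε (local)
    (aK : ι → ((Fin d → ℝ) → ℝ) →ₗ[ℝ] ((Fin d → ℝ) → ℝ) →ₗ[ℝ] ℝ)
    (haKloc : ∀ k, ∀ u u' v v' : (Fin d → ℝ) → ℝ,
      (∀ x ∈ K k, u x = u' x) → (∀ x ∈ K k, v x = v' x) → aK k u v = aK k u' v')
    -- the local spaces H¹_{0,w}(K) (extended by zero)
    (H1w0 : ι → Submodule ℝ ((Fin d → ℝ) → ℝ))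
    (hH1w0zero : ∀ k, ∀ v ∈ H1w0 k, ∀ x ∉ K k, v x = 0)
    -- the Adv-MsFEM-CR basis functions and their span W
    (φ : E → ((Fin d → ℝ) → ℝ))
    (hφloc : ∀ e k, ∀ v ∈ H1w0 k, aK k (φ e) v = 0)
    (hφavg : ∀ e h, avg h (φ e) = if h = inc e then (1 : ℝ) else 0)
    (W : Submodule ℝ ((Fin d → ℝ) → ℝ)) (hW : W = Submodule.span ℝ (Set.range φ))
    -- the weak bubbles
    (Bw : ι → ((Fin d → ℝ) → ℝ))
    (hBwmem : ∀ k, Bw k ∈ H1w0 k)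
    (hBwvar : ∀ k, ∀ v ∈ H1w0 k, aK k (Bw k) v = ∫ x in K k, v x)
    -- the right-hand side
    (f : (Fin d → ℝ) → ℝ)
    -- the Adv-MsFEM-CR-B Galerkin solution w = wW + wB on W ⊕ span{B_K^w}
    (WB : Submodule ℝ ((Fin d → ℝ) → ℝ))
    (hWB : WB = W ⊔ Submodule.span ℝ (Set.range Bw))
    (w wW wB : (Fin d → ℝ) → ℝ)
    (hwW : wW ∈ W) (δ : ι → ℝ) (hwB : wB = ∑ k, δ k • Bw k)
    (hw : w = wW + wB)
    (hGal : ∀ v ∈ WB, (∑ k, aK k w v) = ∫ x in Ω, f x * v x) :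
    (∀ (e : E) (k' : ι), (∑ T, aK T (φ e) (Bw k')) = 0) ∧
    (∀ k k' : ι, k ≠ k' → (∑ T, aK T (Bw k) (Bw k')) = 0) ∧
    (∀ k : ι, aK k (Bw k) (Bw k) = ∫ x in K k, Bw k x) ∧
    ((∀ k, (∫ x in K k, Bw k x) ≠ 0) →
      wB = ∑ k, ((∫ x in K k, f x * Bw k x) / (∫ x in K k, Bw k x)) • Bw k) ∧
    ((∀ k, (∫ x in K k, Bw k x) ≠ 0) → ∀ fval : ι → ℝ,
      (∀ k, ∀ x ∈ K k, f x = fval k) → wB = ∑ k, fval k • Bw k) := by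
  classical
  have hzero_out : ∀ k, ∀ x ∉ K k, Bw k x = 0 :=
    fun k => hH1w0zero k (Bw k) (hBwmem k)
  -- second argument locality: if T ≠ k', Bw k' vanishes on K T
  have haK_zero_snd : ∀ T k', T ≠ k' → ∀ u, aK T u (Bw k') = 0 := by
    intro T k' hT u
    have : aK T u (Bw k') = aK T u 0 := by
      apply haKloc T u u (Bw k') 0 (fun x _ => rfl)
      intro x hx
      exact hzero_out k' x (Set.disjoint_left.mp (hKdisj T k' hT) hx)
    simpa using this
  have haK_zero_fst : ∀ T k, T ≠ k → ∀ v, aK T (Bw k) v = 0 := by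
    intro T k hT v
    have : aK T (Bw k) v = aK T 0 v := by
      apply haKloc T (Bw k) 0 v v _ (fun x _ => rfl)
      intro x hx
      exact hzero_out k x (Set.disjoint_left.mp (hKdisj T k hT) hx)
    simpa using this
  have hi : ∀ (e : E) (k' : ι), (∑ T, aK T (φ e) (Bw k')) = 0 := by
    intro e k'
    apply Finset.sum_eq_zero
    intro T _
    by_cases hT : T = k'
    · subst hT; exact hφloc e T (Bw T) (hBwmem T)
    · exact haK_zero_snd T k' hT _
  have hii : ∀ k k' : ι, k ≠ k' → (∑ T, aK T (Bw k) (Bw k')) = 0 := by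
    intro k k' hkk'
    apply Finset.sum_eq_zero
    intro T _
    by_cases hT : T = k
    · subst hT; exact haK_zero_snd T k' hkk' _
    · exact haK_zero_fst T k hT _
  have hiii : ∀ k : ι, aK k (Bw k) (Bw k) = ∫ x in K k, Bw k x :=
    fun k => hBwvar k (Bw k) (hBwmem k)
  -- W part vanishes against bubbles
  have hWzero : ∀ k', ∀ u ∈ W, (∑ T, aK T u (Bw k')) = 0 := by
    intro k' u hu
    rw [hW] at hu
    induction hu using Submodule.span_induction with
    | mem x hx =>
      obtain ⟨e, rfl⟩ := hx
      exact hi e k'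
    | zero => simp
    | add x y _ _ hx hy =>
      simp only [map_add, LinearMap.add_apply, Finset.sum_add_distrib, hx, hy, add_zero]
    | smul c x _ hx =>
      simp only [_root_.map_smul, LinearMap.smul_apply, smul_eq_mul, ← Finset.mul_sum, hx,
        mul_zero]
  -- key identity from Galerkin orthogonality
  have key : ∀ k', δ k' * (∫ x in K k', Bw k' x) = ∫ x in K k', f x * Bw k' x := by
    intro k'
    have hmem : Bw k' ∈ WB := by
      rw [hWB]
      exact Submodule.mem_sup_right (Submodule.subset_span ⟨k', rfl⟩)
    have hg := hGal (Bw k') hmem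
    -- compute LHS of hg
    have hL : (∑ T, aK T w (Bw k')) = δ k' * (∫ x in K k', Bw k' x) := by
      rw [hw]
      have hsplit : (∑ T, aK T (wW + wB) (Bw k'))
          = (∑ T, aK T wW (Bw k')) + ∑ T, aK T wB (Bw k') := by
        simp [map_add, Finset.sum_add_distrib]
      rw [hsplit, hWzero k' wW hwW, zero_add]
      have : (∑ T, aK T wB (Bw k')) = ∑ k, δ k * (∑ T, aK T (Bw k) (Bw k')) := by
        rw [hwB]
        simp only [_root_.map_sum, _root_.map_smul, LinearMap.sum_apply, LinearMap.smul_apply,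
          smul_eq_mul, Finset.mul_sum]
        exact Finset.sum_comm
      rw [this, Finset.sum_eq_single k' (fun k _ hk => by rw [hii k k' hk, mul_zero])
        (fun h => absurd (Finset.mem_univ k') h)]
      congr 1
      rw [Finset.sum_eq_single k' (fun T _ hT => haK_zero_fst T k' hT _)
        (fun h => absurd (Finset.mem_univ k') h)]
      exact hiii k'
    -- compute RHS of hg
    have hR : (∫ x in Ω, f x * Bw k' x) = ∫ x in K k', f x * Bw k' x := by
      have hind : (fun x => f x * Bw k' x)
          = Set.indicator (K k') (fun x => f x * Bw k' x) := by
        funext x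
        by_cases hx : x ∈ K k'
        · rw [Set.indicator_of_mem hx]
        · rw [Set.indicator_of_notMem hx, hzero_out k' x hx, mul_zero]
      calc (∫ x in Ω, f x * Bw k' x)
          = ∫ x in Ω, Set.indicator (K k') (fun x => f x * Bw k' x) x := by rw [← hind]
        _ = ∫ x in Ω ∩ K k', f x * Bw k' x := setIntegral_indicator (hKmeas k')
        _ = ∫ x in K k', f x * Bw k' x := by rw [Set.inter_eq_right.mpr (hKΩ k')]
    rw [hL, hR] at hg
    exact hg
  refine ⟨hi, hii, hiii, ?_, ?_⟩
  · intro hne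
    rw [hwB]
    refine Finset.sum_congr rfl fun k _ => ?_
    congr 1
    rw [eq_div_iff (hne k)]
    exact key k
  · intro hne fval hf
    rw [hwB]
    refine Finset.sum_congr rfl fun k _ => ?_
    congr 1
    have hδ : δ k * (∫ x in K k, Bw k x) = fval k * (∫ x in K k, Bw k x) := by
      rw [key k, ← integral_const_mul]
      exact setIntegral_congr_fun (hKmeas k) fun x hx => by rw [hf k x hx]
    exact mul_right_cancel₀ (hne k) hδ
end

section
/- One-dimensional stabilization parameter formula: let m > 0, b > 0 and H > 0, and let B(x) = x/b − (H/b)·(e^{bx/m} − 1)/(e^{bH/m} − 1) be the solution of −m B'' + b B' = 1 on (0, H) with B(0) = B(H) = 0. Then the mean value of B satisfies (1/H) ∫_0^H B(x) dx = (H/(2b)) (coth(Pe) − 1/Pe), where Pe = bH/(2m). -/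
/-! Integrating `b • B` termwise gives the mean `(H / (2b)) (1 + 2 / (e^{2 Pe} − 1) − 1 / Pe)`,
and `1 + 2 / (e^{2t} − 1)` is `coth t`. -/

open Real intervalIntegral

theorem integral_exp_mul {k : ℝ} (hk : k ≠ 0) (a c : ℝ) :
    ∫ x in a..c, exp (k * x) = (exp (k * c) - exp (k * a)) / k := by
  rw [intervalIntegral.integral_comp_mul_left exp hk, integral_exp, smul_eq_mul, inv_mul_eq_div]

theorem cosh_div_sinh_eq_one_add_two_div {t : ℝ} (ht : t ≠ 0) :
    cosh t / sinh t = 1 + 2 / (exp (2 * t) - 1) := by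
  have hsq : exp (2 * t) = exp t ^ 2 := by rw [← exp_nat_mul]; norm_num
  have hexp : exp t ^ 2 - 1 ≠ 0 := by
    rw [← hsq, sub_ne_zero, Ne, exp_eq_one_iff]; positivity
  rw [cosh_eq, sinh_eq, exp_neg, hsq]
  field_simp
  ring

theorem integral_bubble {k H : ℝ} (hkH : k * H ≠ 0) :
    ∫ x in (0 : ℝ)..H, (x - H * ((exp (k * x) - 1) / (exp (k * H) - 1)))
      = H ^ 2 / 2 * (1 + 2 / (exp (k * H) - 1) - 2 / (k * H)) := by
  obtain ⟨hk, hH⟩ := mul_ne_zero_iff.mp hkH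
  have hE : exp (k * H) - 1 ≠ 0 := by
    rw [sub_ne_zero, Ne, exp_eq_one_iff]; exact hkH
  rw [integral_sub, integral_const_mul, integral_div, integral_sub,
      integral_exp_mul hk, integral_id]
  · simp only [integral_const, smul_eq_mul, sub_zero, mul_one, mul_zero, exp_zero, ne_eq,
      OfNat.ofNat_ne_zero, not_false_eq_true, zero_pow]
    generalize exp (k * H) = E at hE ⊢
    field_simp
    ring
  all_goals exact Continuous.intervalIntegrable (by fun_prop) _ _

/-- One-dimensional stabilization parameter formula: for `m > 0`,
`b > 0`, `H > 0`, the residual-free bubble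
`B(x) = x/b − (H/b)·(e^{bx/m} − 1)/(e^{bH/m} − 1)`
(the solution of `−m B'' + b B' = 1` on `(0,H)` with `B(0) = B(H) = 0`) has mean value
`(1/H) ∫₀^H B = (H/(2b)) (coth(Pe) − 1/Pe)` with the element Péclet number
`Pe = bH/(2m)` (here `coth t = cosh t / sinh t`). -/
theorem one_dimensional_stabilization_parameter
    (m b H : ℝ) (hm : 0 < m) (hb : 0 < b) (hH : 0 < H)
    (B : ℝ → ℝ)
    (hBdef : ∀ x : ℝ, B x =
      x / b - (H / b) * ((Real.exp (b * x / m) - 1) / (Real.exp (b * H / m) - 1)))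
    (Pe : ℝ) (hPe : Pe = b * H / (2 * m)) :
    (1 / H) * ∫ x in (0 : ℝ)..H, B x
      = (H / (2 * b)) * (Real.cosh Pe / Real.sinh Pe - 1 / Pe) := by
  have hB (x : ℝ) : B x = (x - H * ((exp (b / m * x) - 1) / (exp (b / m * H) - 1))) / b := by
    rw [hBdef]; ring_nf
  have hkH : b / m * H ≠ 0 := by positivity
  have hPe0 : Pe ≠ 0 := by rw [hPe]; positivity
  simp only [hB]
  rw [integral_div, integral_bubble hkH, cosh_div_sinh_eq_one_add_two_div hPe0, hPe]
  field_simp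
end

section
/- Equality of the Galerkin and Petrov–Galerkin Adv-MsFEM-CR system matrices: if w is a broken H^1 function satisfying a_K^ε(w, z) = 0 for every z ∈ H^1_{0,w}(K) and every element K (as does any element of the Adv-MsFEM-CR space W_H^{ε,adv}), and if v, v̄ are broken H^1 functions such that (v − v̄)|_K ∈ H^1_{0,w}(K) for every K (i.e., v and v̄ have the same average on every face of every element), then Σ_{K∈T_H} a_K^ε(w, v) = Σ_{K∈T_H} a_K^ε(w, v̄). In particular, Σ_{K∈T_H} a_K^ε(φ_e^{ε,adv}, φ_h^{ε,adv}) = Σ_{K∈T_H} a_K^ε(φ_e^{ε,adv}, φ_h^{CR}) for all internal faces e, h, so the Galerkin and Petrov–Galerkin (with P1 Crouzeix–Raviart test functions) Adv-MsFEM-CR methods have the same system matrix. -/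
open Finset

/-- Equality of the Galerkin and Petrov–Galerkin Adv-MsFEM-CR system
matrices.  General claim: if a broken `H¹` function `w` satisfies
`a_K^ε(w, z) = 0` for every `z ∈ H¹_{0,w}(K)` and every element `K`, and if `v, v̄`
are broken `H¹` functions with `(v − v̄)|_K ∈ H¹_{0,w}(K)` for every `K` (same average
on every face of every element), then `∑_K a_K^ε(w, v) = ∑_K a_K^ε(w, v̄)`.
In particular, since each Adv-MsFEM-CR basis function `φms e` is locally `a`-harmonic
and `φms h` and the P1 Crouzeix–Raviart function `φCR h` share all face averages,
`∑_K a_K^ε(φms e, φms h) = ∑_K a_K^ε(φms e, φCR h)` for all internal faces `e, h`: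
the Galerkin and Petrov–Galerkin Adv-MsFEM-CR methods have the same system matrix. -/
theorem galerkin_petrov_galerkin_same_matrix
    (d : ℕ) (ι : Type) [Fintype ι]
    (K : ι → Set (Fin d → ℝ))
    (E Eall : Type) [DecidableEq Eall] (inc : E → Eall)
    (avg : Eall → (((Fin d → ℝ) → ℝ) →ₗ[ℝ] ℝ))
    -- the broken H¹ space
    (Hbrok : Submodule ℝ ((Fin d → ℝ) → ℝ))
    -- the element bilinear forms a_K^ε (local)
    (aK : ι → ((Fin d → ℝ) → ℝ) →ₗ[ℝ] ((Fin d → ℝ) → ℝ) →ₗ[ℝ] ℝ)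
    (haKloc : ∀ k, ∀ u u' v v' : (Fin d → ℝ) → ℝ,
      (∀ x ∈ K k, u x = u' x) → (∀ x ∈ K k, v x = v' x) → aK k u v = aK k u' v')
    -- the local spaces H¹_{0,w}(K) (extended by zero)
    (H1w0 : ι → Submodule ℝ ((Fin d → ℝ) → ℝ))
    (hH1w0zero : ∀ k, ∀ v ∈ H1w0 k, ∀ x ∉ K k, v x = 0)
    -- the Adv-MsFEM-CR basis functions
    (φms : E → ((Fin d → ℝ) → ℝ))
    (hφmsbrok : ∀ e, φms e ∈ Hbrok)
    (hφmsloc : ∀ e k, ∀ v ∈ H1w0 k, aK k (φms e) v = 0)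
    (hφmsavg : ∀ e h, avg h (φms e) = if h = inc e then (1 : ℝ) else 0)
    -- the P1 Crouzeix–Raviart basis functions
    (φCR : E → ((Fin d → ℝ) → ℝ))
    (hφCRbrok : ∀ e, φCR e ∈ Hbrok)
    (hφCRavg : ∀ e h, avg h (φCR e) = if h = inc e then (1 : ℝ) else 0)
    -- φms h and φCR h share all face averages, hence their difference restricted to
    -- each element lies in H¹_{0,w}(K)
    (hφrestr : ∀ (h : E) (k : ι), ∃ g ∈ H1w0 k, ∀ x ∈ K k, φms h x - φCR h x = g x) :
    -- general claim
    ((∀ w v vbar : (Fin d → ℝ) → ℝ, w ∈ Hbrok → v ∈ Hbrok → vbar ∈ Hbrok →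
      (∀ k, ∀ z ∈ H1w0 k, aK k w z = 0) →
      (∀ k, ∃ g ∈ H1w0 k, ∀ x ∈ K k, v x - vbar x = g x) →
      (∑ k, aK k w v) = ∑ k, aK k w vbar) ∧
    -- in particular, the two system matrices coincide
    (∀ e h : E, (∑ k, aK k (φms e) (φms h)) = ∑ k, aK k (φms e) (φCR h))) := by
  have main : ∀ w v vbar : (Fin d → ℝ) → ℝ, w ∈ Hbrok → v ∈ Hbrok → vbar ∈ Hbrok →
      (∀ k, ∀ z ∈ H1w0 k, aK k w z = 0) →
      (∀ k, ∃ g ∈ H1w0 k, ∀ x ∈ K k, v x - vbar x = g x) →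
      (∑ k, aK k w v) = ∑ k, aK k w vbar := by
    intro w v vbar _ _ _ hharm hdiff
    refine Finset.sum_congr rfl ?_
    intro k _
    obtain ⟨g, hg, hgx⟩ := hdiff k
    have h1 : aK k w v = aK k w (vbar + g) := by
      refine haKloc k w w v (vbar + g) (fun _ _ => rfl) ?_
      intro x hx
      have := hgx x hx
      simp only [Pi.add_apply]
      linarith
    rw [h1, map_add, hharm k g hg, add_zero]
  refine ⟨main, fun e h => ?_⟩
  exact main (φms e) (φms h) (φCR h) (hφmsbrok e) (hφmsbrok h) (hφCRbrok h)
    (fun k z hz => hφmsloc e k z hz) (hφrestr h)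
end
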